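/- Let ψ be a nontrivial additive character of F_q with values in ℂ, assume n = Σ_i d_i² n_i ≥ 2, and set m = Σ_i d_i n_i. Then the full sum over the unit group satisfies Σ_{x ∈ B*} ψ(Tr_B(x)) = (−1)^{Σ_i d_i} · q^{(n−m)/2}. -/

import Mathlib

/-!
Since `ψ ∘ Tr_B` is a product of the characters `χᵢ = ψ ∘ Tr_{F_{q^{nᵢ}}/F_q}` of the simple
factors, the sum is the product of the sums `S_d = ∑_{g ∈ GL_d(E)} χ(tr g)`, each `χᵢ` being
nontrivial because the field trace is surjective. These satisfy `S_{d+1} = -|E|^d S_d`: write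
`g = (A B; C t)` with `t` a scalar. The determinant of `g` is affine in `t` with slope `det A`, so
summing `χ(tr A + t)` over the `t` making `g` invertible gives `0` if `A` is singular and
`-χ(tr A) χ(C A⁻¹ B)` otherwise; summed over `C`, the character orthogonality relations leave
only `B = 0`. Hence `S_d = (-1)^d |E|^(d choose 2)`, and `(n - m)/2 = ∑ nᵢ (dᵢ choose 2)`.
-/

open Matrix Finset

namespace AddChar

lemma map_sum_eq_prod {A M ι : Type*} [AddCommMonoid A] [CommMonoid M] (ψ : AddChar A M)
    (s : Finset ι) (f : ι → A) : ψ (∑ i ∈ s, f i) = ∏ i ∈ s, ψ (f i) := by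
  classical
  induction s using Finset.induction_on with
  | empty => simp
  | insert i s hi ih => rw [sum_insert hi, prod_insert hi, map_add_eq_mul, ih]

lemma compAddMonoidHom_ne_one {A B M : Type*} [AddMonoid A] [AddMonoid B] [Monoid M]
    {ψ : AddChar B M} (hψ : ψ ≠ 1) {f : A →+ B} (hf : Function.Surjective f) :
    ψ.compAddMonoidHom f ≠ 1 := by
  obtain ⟨c, hc⟩ := ne_one_iff.1 hψ
  obtain ⟨a, rfl⟩ := hf c
  exact ne_one_iff.2 ⟨a, hc⟩

variable {E : Type*} [Field E] [Fintype E] [DecidableEq E] {χ : AddChar E ℂ}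

lemma sum_dotProduct (hχ : χ ≠ 1) {ι : Type*} [Fintype ι] [DecidableEq ι] (w : ι → E) :
    ∑ c : ι → E, χ (c ⬝ᵥ w) = if w = 0 then (Fintype.card E : ℂ) ^ Fintype.card ι else 0 := by
  simp_rw [dotProduct, map_sum_eq_prod]
  rw [← Fintype.prod_sum (fun j x => χ (x * w j))]
  simp_rw [sum_mulShift _ (IsPrimitive.of_ne_one hχ), Nat.cast_ite, Nat.cast_zero, prod_ite_zero,
    prod_const, card_univ, mem_univ, true_implies, ← funext_iff, Pi.zero_def]

lemma sum_ite_add_mul_eq_zero (hχ : χ ≠ 1) (c a : E) :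
    ∑ t, (if c + a * t = 0 then 0 else χ t) = if a = 0 then 0 else -χ (-c / a) := by
  split_ifs with ha
  · by_cases hc : c = 0
    · simp [ha, hc]
    · simp [ha, hc, sum_eq_zero_of_ne_one hχ]
  · have hroot (t : E) : c + a * t = 0 ↔ t = -c / a := by
      rw [eq_div_iff ha]
      constructor <;> intro h <;> linear_combination h
    simp_rw [hroot, sum_ite, sum_const_zero, zero_add, filter_ne', sum_erase_eq_sub (mem_univ _),
      sum_eq_zero_of_ne_one hχ, zero_sub]

end AddChar

lemma Nat.sq_eq_add_two_mul_choose_two (d : ℕ) : d ^ 2 = d + 2 * d.choose 2 := by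
  rw [Nat.choose_two_right, Nat.mul_div_cancel' (Nat.even_mul_pred_self d).two_dvd]
  cases d <;> simp; ring

lemma sum_units_eq_sum_ite_isUnit {M β : Type*} [Monoid M] [Fintype M] [DecidableEq M]
    [AddCommMonoid β] (f : M → β) : ∑ u : Mˣ, f u = ∑ x : M, if IsUnit x then f x else 0 := by
  rw [← sum_filter]
  refine sum_nbij' (fun u => (u : M)) (fun x => if h : IsUnit x then h.unit else 1)
    ?_ ?_ ?_ ?_ ?_ <;> intros <;> simp_all

namespace Matrix

variable {m n o R : Type*}

lemma trace_fromBlocks [Fintype m] [Fintype n] [AddCommMonoid R] (A : Matrix m m R)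
    (B : Matrix m n R) (C : Matrix n m R) (D : Matrix n n R) :
    (fromBlocks A B C D).trace = A.trace + D.trace := by
  simp [trace, Fintype.sum_sum_type]

lemma trace_reindex [Fintype m] [Fintype n] [AddCommMonoid R] (e : m ≃ n) (A : Matrix m m R) :
    (reindex e e A).trace = A.trace :=
  e.symm.sum_comp A.diag

def fromBlocksEquiv (l m n o R : Type*) :
    Matrix n l R × Matrix n m R × Matrix o l R × Matrix o m R ≃ Matrix (n ⊕ o) (l ⊕ m) R where
  toFun X := fromBlocks X.1 X.2.1 X.2.2.1 X.2.2.2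
  invFun M := (M.toBlocks₁₁, M.toBlocks₁₂, M.toBlocks₂₁, M.toBlocks₂₂)
  left_inv _ := by simp
  right_inv := fromBlocks_toBlocks

variable [Fintype m] [DecidableEq m] [Fintype o] [DecidableEq o] [Unique o] [CommRing R]

lemma det_fromBlocks_eq_add_mul (A : Matrix m m R) (B : Matrix m o R) (C : Matrix o m R)
    (D : Matrix o o R) :
    (fromBlocks A B C D).det = (fromBlocks A B C 0).det + A.det * D default default := by
  set r : m ⊕ o := Sum.inr default
  have hrow : fromBlocks A B C D = updateRow (fromBlocks A B C 0) r
      (fromBlocks A B C 0 r + Pi.single r (D default default)) := by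
    ext (i | i) (j | j) <;> simp [r, updateRow_apply, Unique.eq_default]
  have hsingle : updateRow (fromBlocks A B C 0) r (Pi.single r (D default default)) =
      fromBlocks A B 0 D := by
    ext (i | i) (j | j) <;> simp [r, updateRow_apply, Unique.eq_default]
  rw [hrow, det_updateRow_add, updateRow_eq_self, hsingle, det_fromBlocks_zero₂₁, det_unique D]

lemma det_fromBlocks_zero_of_isUnit {A : Matrix m m R} (hA : IsUnit A) (B : Matrix m o R)
    (C : Matrix o m R) :
    (fromBlocks A B C 0).det = -(A.det * (C * A⁻¹ * B) default default) := by
  let := hA.invertible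
  rw [det_fromBlocks₁₁, invOf_eq_nonsing_inv, det_unique (0 - C * A⁻¹ * B), Matrix.sub_apply,
    Matrix.zero_apply, zero_sub, mul_neg]

end Matrix

section GLTraceSum

variable {E : Type*} [Field E] [Fintype E] [DecidableEq E] {χ : AddChar E ℂ}
  {ι κ o : Type*} [Fintype ι] [DecidableEq ι] [Fintype κ] [DecidableEq κ]
  [Fintype o] [DecidableEq o] [Unique o]

variable (χ ι) in
def glTraceSum : ℂ := ∑ g : GL ι E, χ (g : Matrix ι ι E).trace

lemma glTraceSum_eq_sum_ite_isUnit :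
    glTraceSum χ ι = ∑ M : Matrix ι ι E, if IsUnit M then χ M.trace else 0 :=
  sum_units_eq_sum_ite_isUnit fun M : Matrix ι ι E => χ M.trace

lemma glTraceSum_congr (e : ι ≃ κ) : glTraceSum χ ι = glTraceSum (E := E) χ κ :=
  Fintype.sum_equiv (Units.mapEquiv (reindexAlgEquiv E E e).toMulEquiv) _ _
    fun g => congrArg χ (trace_reindex e (g : Matrix ι ι E)).symm

lemma glTraceSum_of_isEmpty [IsEmpty ι] : glTraceSum χ ι = 1 := by
  simp [glTraceSum_eq_sum_ite_isUnit, trace_eq_zero_of_isEmpty]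

lemma sum_ite_isUnit_fromBlocks (hχ : χ ≠ 1) (A : Matrix ι ι E) (B : Matrix ι o E)
    (C : Matrix o ι E) :
    ∑ D : Matrix o o E, (if IsUnit (fromBlocks A B C D) then χ (fromBlocks A B C D).trace else 0)
      = if IsUnit A then -(χ A.trace * χ ((C * A⁻¹ * B) default default)) else 0 := by
  set g : E → ℂ := fun t => if (fromBlocks A B C 0).det + A.det * t = 0 then 0 else χ t
  have hsummand (D : Matrix o o E) :
      (if IsUnit (fromBlocks A B C D) then χ (fromBlocks A B C D).trace else 0) =
        χ A.trace * g (D default default) := by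
    have htrace : D.trace = D default default := Fintype.sum_unique _
    simp only [g, isUnit_iff_isUnit_det (fromBlocks A B C D), isUnit_iff_ne_zero,
      det_fromBlocks_eq_add_mul A B C D, trace_fromBlocks, htrace, AddChar.map_add_eq_mul,
      mul_ite, mul_zero, ite_not]
  have hscalar : ∑ D : Matrix o o E, g (D default default) = ∑ t, g t :=
    Fintype.sum_equiv ((Equiv.funUnique o (o → E)).trans (Equiv.funUnique o E)) _ _ fun _ => rfl
  rw [sum_congr rfl fun D _ => hsummand D, ← mul_sum, hscalar,
    AddChar.sum_ite_add_mul_eq_zero hχ]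
  by_cases hA : IsUnit A
  · have hdet : A.det ≠ 0 := isUnit_iff_ne_zero.1 ((isUnit_iff_isUnit_det A).1 hA)
    rw [if_pos hA, if_neg hdet, det_fromBlocks_zero_of_isUnit hA, neg_neg,
      mul_div_cancel_left₀ _ hdet, mul_neg]
  · have hdet : A.det = 0 :=
      not_not.1 fun h => hA ((isUnit_iff_isUnit_det A).2 (isUnit_iff_ne_zero.2 h))
    rw [if_neg hA, if_pos hdet, mul_zero]

lemma sum_sum_addChar_mul_inv_mul (hχ : χ ≠ 1) {A : Matrix ι ι E} (hA : IsUnit A) :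
    ∑ B : Matrix ι o E, ∑ C : Matrix o ι E, χ ((C * A⁻¹ * B) default default) =
      (Fintype.card E : ℂ) ^ Fintype.card ι := by
  have hC (v : Matrix ι o E) : ∑ C : Matrix o ι E, χ ((C * v) default default) =
      if v = 0 then (Fintype.card E : ℂ) ^ Fintype.card ι else 0 := by
    have hrow : ∑ C : Matrix o ι E, χ ((C * v) default default) =
        ∑ c : ι → E, χ (c ⬝ᵥ fun j => v j default) :=
      Fintype.sum_equiv (Equiv.funUnique o (ι → E)) _ _ fun _ => rfl
    rw [hrow, AddChar.sum_dotProduct hχ]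
    simp only [funext_iff, ← Matrix.ext_iff, Unique.forall_iff, Pi.zero_apply, Matrix.zero_apply]
  have hinv (B : Matrix ι o E) : A⁻¹ * B = 0 ↔ B = 0 := by
    refine ⟨fun h => ?_, fun h => by rw [h, Matrix.mul_zero]⟩
    rw [← mul_nonsing_inv_cancel_left A B ((isUnit_iff_isUnit_det A).1 hA), h, Matrix.mul_zero]
  simp_rw [Matrix.mul_assoc, hC, hinv, sum_ite_eq', mem_univ, if_true]

lemma glTraceSum_sum_of_unique (hχ : χ ≠ 1) :
    glTraceSum χ (ι ⊕ o) = -(Fintype.card E : ℂ) ^ Fintype.card ι * glTraceSum χ ι := by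
  have hblocks : ∑ M : Matrix (ι ⊕ o) (ι ⊕ o) E, (if IsUnit M then χ M.trace else 0) =
      ∑ A : Matrix ι ι E, ∑ B : Matrix ι o E, ∑ C : Matrix o ι E, ∑ D : Matrix o o E,
        if IsUnit (fromBlocks A B C D) then χ (fromBlocks A B C D).trace else 0 := by
    rw [← (fromBlocksEquiv ι o ι o E).sum_comp]
    simp only [Fintype.sum_prod_type]
    rfl
  rw [glTraceSum_eq_sum_ite_isUnit, glTraceSum_eq_sum_ite_isUnit, hblocks, mul_sum]
  refine sum_congr rfl fun A _ => ?_
  simp only [sum_ite_isUnit_fromBlocks hχ]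
  split_ifs with hA
  · simp only [sum_neg_distrib, ← mul_sum, sum_sum_addChar_mul_inv_mul hχ hA]
    ring
  · simp

lemma glTraceSum_fin (hχ : χ ≠ 1) (e : ℕ) :
    glTraceSum χ (Fin e) = (-1) ^ e * (Fintype.card E : ℂ) ^ e.choose 2 := by
  induction e with
  | zero => simp [glTraceSum_of_isEmpty]
  | succ e ih =>
    rw [← glTraceSum_congr finSumFinEquiv, glTraceSum_sum_of_unique hχ, ih, Fintype.card_fin,
      Nat.choose_succ_succ', Nat.choose_one_right]
    ring

end GLTraceSum

open Classical in
theorem stmt_11_general (q : ℕ) (F : Type) [Field F] [Fintype F] (hF : Fintype.card F = q)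
    (k : ℕ) (d nn : Fin k → ℕ)
    (K : Fin k → Type) [∀ i, Field (K i)] [∀ i, Algebra F (K i)] [∀ i, Fintype (K i)]
    (hK : ∀ i, Module.finrank F (K i) = nn i)
    (n : ℕ) (hn : n = ∑ i, d i ^ 2 * nn i)
    (m : ℕ) (hm : m = ∑ i, d i * nn i)
    (ψ : AddChar F ℂ) (hψ : ∃ c, ψ c ≠ 1) :
    (∑ x : ∀ i, GL (Fin (d i)) (K i),
        ψ (∑ i, Algebra.trace F (K i) (x i : Matrix (Fin (d i)) (Fin (d i)) (K i)).trace))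
      = (-1 : ℂ) ^ (∑ i, d i) * (q : ℂ) ^ ((n - m) / 2) := by
  let χ i : AddChar (K i) ℂ := ψ.compAddMonoidHom (Algebra.trace F (K i)).toAddMonoidHom
  have hχ i : χ i ≠ 1 :=
    AddChar.compAddMonoidHom_ne_one (AddChar.ne_one_iff.2 hψ) (Algebra.trace_surjective F (K i))
  have hcard i : Fintype.card (K i) = q ^ nn i := by
    rw [Module.card_eq_pow_finrank (K := F), hK, hF]
  have hnm : n = m + 2 * ∑ i, nn i * (d i).choose 2 := by
    rw [hn, hm, mul_sum, ← sum_add_distrib]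
    refine sum_congr rfl fun i _ => ?_
    rw [Nat.sq_eq_add_two_mul_choose_two]
    ring
  calc _ = ∏ i, glTraceSum (χ i) (Fin (d i)) := by
        simp only [glTraceSum, Fintype.prod_sum, AddChar.map_sum_eq_prod]
        rfl
    _ = ∏ i, (-1) ^ d i * (q : ℂ) ^ (nn i * (d i).choose 2) := prod_congr rfl fun i _ => by
        rw [glTraceSum_fin (hχ i), hcard, Nat.cast_pow, pow_mul]
    _ = _ := by
        rw [prod_mul_distrib, prod_pow_eq_pow_sum, prod_pow_eq_pow_sum, hnm,
          Nat.add_sub_cancel_left, Nat.mul_div_cancel_left _ two_pos]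

open Classical in
theorem stmt_11 (q : ℕ) (F : Type) [Field F] [Fintype F] (hF : Fintype.card F = q)
    (k : ℕ) (hk : 0 < k) (d nn : Fin k → ℕ) (hd : ∀ i, 0 < d i) (hnn : ∀ i, 0 < nn i)
    (K : Fin k → Type) [∀ i, Field (K i)] [∀ i, Algebra F (K i)] [∀ i, Fintype (K i)]
    (hK : ∀ i, Module.finrank F (K i) = nn i)
    (n : ℕ) (hn : n = ∑ i, d i ^ 2 * nn i) (hn2 : 2 ≤ n)
    (m : ℕ) (hm : m = ∑ i, d i * nn i)
    (ψ : AddChar F ℂ) (hψ : ∃ c, ψ c ≠ 1) :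
    (∑ x : ∀ i, GL (Fin (d i)) (K i),
        ψ (∑ i, Algebra.trace F (K i) (x i : Matrix (Fin (d i)) (Fin (d i)) (K i)).trace))
      = (-1 : ℂ) ^ (∑ i, d i) * (q : ℂ) ^ ((n - m) / 2) :=
  stmt_11_general q F hF k d nn K hK n hn m hm ψ hψ
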